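/- Define p_n = A(BA(Aⁿ(1/6, 2/3))) for n ∈ ℕ. Then Aⁿ(1/6,2/3) → (0,1) as n → ∞, p_n → (1/6, 2/3), and the normalized differences d_n/|d_n| with d_n = p_n − (1/6,2/3) converge to (−2/√5, 1/√5). -/

import Mathlib

/-
The orbit of (1/6, 2/3) under A is explicit: Aⁿ(1/6, 2/3) = (1/Dₙ, 1 - (n+2)/Dₙ) with
Dₙ = 2^(n+3) - 2, since A(1/D, 1 - k/D) = (1/(2D+2), 1 - (k+1)/(2D+2)). It therefore tends to
the fixed point (0, 1) of A, and pₙ tends to A(BA(0, 1)) = (1/6, 2/3) by continuity.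
For the direction, A(BA(x, y)) - (1/6, 2/3) is a positive multiple of (2(y-x-1), 4x-y+1), which
along the orbit is a positive multiple of (-2, 1 + 3/(n+3)); normalizing and letting n → ∞
gives (-2, 1)/√5.
-/

noncomputable def expA (p : ℝ × ℝ) : ℝ × ℝ :=
  (p.1 / (2 * (p.1 + 1)), (p.1 + p.2 + 1) / (2 * (p.1 + 1)))

noncomputable def expB (p : ℝ × ℝ) : ℝ × ℝ := (p.2 - 1/2, p.1 + 1/2)

noncomputable def expBA (p : ℝ × ℝ) : ℝ × ℝ := expB (expA p)

noncomputable def pSeq (n : ℕ) : ℝ × ℝ := expA (expBA (expA^[n] (1/6, 2/3)))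

noncomputable def dSeq (n : ℕ) : ℝ × ℝ :=
  ((pSeq n).1 - 1/6, (pSeq n).2 - 2/3)

noncomputable def dNorm (n : ℕ) : ℝ :=
  Real.sqrt ((dSeq n).1 ^ 2 + (dSeq n).2 ^ 2)

open Filter Topology

noncomputable def unitDirection (v : ℝ × ℝ) : ℝ × ℝ :=
  (v.1 / √(v.1 ^ 2 + v.2 ^ 2), v.2 / √(v.1 ^ 2 + v.2 ^ 2))

lemma unitDirection_smul {c : ℝ} (hc : 0 < c) (v : ℝ × ℝ) :
    unitDirection (c • v) = unitDirection v := by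
  have hsqrt : √((c * v.1) ^ 2 + (c * v.2) ^ 2) = c * √(v.1 ^ 2 + v.2 ^ 2) := by
    rw [show (c * v.1) ^ 2 + (c * v.2) ^ 2 = c ^ 2 * (v.1 ^ 2 + v.2 ^ 2) by ring,
      Real.sqrt_mul (sq_nonneg c), Real.sqrt_sq hc.le]
  simp only [unitDirection, Prod.smul_fst, Prod.smul_snd, smul_eq_mul, hsqrt,
    mul_div_mul_left _ _ hc.ne']

lemma continuousAt_unitDirection {v : ℝ × ℝ} (hv : v ≠ 0) : ContinuousAt unitDirection v := by
  have hpos : 0 < v.1 ^ 2 + v.2 ^ 2 := by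
    obtain ⟨a, b⟩ := v
    rcases not_and_or.mp (Prod.mk_eq_zero.not.mp hv) with ha | hb <;> positivity
  have hne : √(v.1 ^ 2 + v.2 ^ 2) ≠ 0 := (Real.sqrt_pos.mpr hpos).ne'
  unfold unitDirection
  fun_prop (disch := exact hne)

lemma continuousAt_expA {p : ℝ × ℝ} (hp : p.1 + 1 ≠ 0) : ContinuousAt expA p := by
  have hne : 2 * (p.1 + 1) ≠ 0 := mul_ne_zero two_ne_zero hp
  unfold expA
  fun_prop (disch := exact hne)

lemma continuous_expB : Continuous expB := by
  unfold expB; fun_prop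

lemma expA_one_div (D k : ℝ) (hD : 0 < D) :
    expA (1 / D, 1 - k / D) = (1 / (2 * D + 2), 1 - (k + 1) / (2 * D + 2)) := by
  simp only [expA, Prod.mk.injEq]
  constructor <;> field_simp <;> ring

lemma two_pow_add_three_sub_two_pos (n : ℕ) : (0 : ℝ) < 2 ^ (n + 3) - 2 := by
  have : (1 : ℝ) ≤ 2 ^ n := one_le_pow₀ one_le_two
  rw [pow_add]; linarith

lemma iterate_expA_start (n : ℕ) :
    expA^[n] (1/6, 2/3) = (1 / (2 ^ (n + 3) - 2), 1 - ((n : ℝ) + 2) / (2 ^ (n + 3) - 2)) := by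
  induction n with
  | zero => norm_num [expA]
  | succ n ih =>
    rw [Function.iterate_succ_apply', ih, expA_one_div _ _ (two_pow_add_three_sub_two_pos n)]
    push_cast
    ring_nf

lemma expBA_mk (x y : ℝ) (hx : x + 1 ≠ 0) :
    expBA (x, y) = (y / (2 * (x + 1)), (2 * x + 1) / (2 * (x + 1))) := by
  simp only [expBA, expB, expA, Prod.mk.injEq]
  constructor <;> field_simp <;> ring

lemma expA_expBA_sub (x y : ℝ) (hx : x + 1 ≠ 0) (hs : 2 * x + y + 2 ≠ 0) :
    expA (expBA (x, y)) - (1/6, 2/3)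
      = (6 * (2 * x + y + 2))⁻¹ • (2 * (y - x - 1), 4 * x - y + 1) := by
  have hu : y / (2 * (x + 1)) + 1 = (2 * x + y + 2) / (2 * (x + 1)) := by
    field_simp; ring
  simp only [expBA_mk x y hx, expA, hu, Prod.mk_sub_mk, Prod.smul_mk, smul_eq_mul, Prod.mk.injEq]
  constructor <;> field_simp <;> ring

lemma dSeq_eq_pSeq_sub (n : ℕ) : dSeq n = pSeq n - (1/6, 2/3) := rfl

lemma unitDirection_dSeq (n : ℕ) :
    unitDirection (dSeq n) = unitDirection (-2, 1 + 3 / ((n : ℝ) + 3)) := by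
  set D : ℝ := 2 ^ (n + 3) - 2
  have hD : 0 < D := two_pow_add_three_sub_two_pos n
  have hnD : (n : ℝ) < 3 * D := by
    have : (n : ℝ) + 1 ≤ 2 ^ n := by exact_mod_cast Nat.lt_two_pow_self
    simp only [D, pow_add]; linarith
  have hs : 2 * (1 / D) + (1 - ((n : ℝ) + 2) / D) + 2 = (3 * D - n) / D := by
    field_simp; ring
  have hs_pos : 0 < 2 * (1 / D) + (1 - ((n : ℝ) + 2) / D) + 2 := by
    rw [hs]; exact div_pos (by linarith) hD
  have hv : (2 * (1 - ((n : ℝ) + 2) / D - 1 / D - 1), 4 * (1 / D) - (1 - ((n : ℝ) + 2) / D) + 1)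
      = (((n : ℝ) + 3) / D) • ((-2 : ℝ), 1 + 3 / ((n : ℝ) + 3)) := by
    simp only [Prod.smul_mk, smul_eq_mul, Prod.mk.injEq]
    constructor <;> field_simp <;> ring
  rw [dSeq_eq_pSeq_sub, pSeq, iterate_expA_start, expA_expBA_sub _ _ (by positivity) hs_pos.ne',
    unitDirection_smul (by positivity), hv, unitDirection_smul (by positivity)]

lemma tendsto_natCast_add_two_div :
    Tendsto (fun n : ℕ => ((n : ℝ) + 2) / (2 ^ (n + 3) - 2)) atTop (𝓝 0) := by
  have h : Tendsto (fun n : ℕ => ((n : ℝ) + 2) / 2 ^ (n + 2)) atTop (𝓝 0) := by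
    simpa [Function.comp_def] using
      (tendsto_pow_const_div_const_pow_of_one_lt 1 one_lt_two).comp (tendsto_add_atTop_nat 2)
  refine squeeze_zero (fun n => ?_) (fun n => ?_) h
  · exact div_nonneg (by positivity) (two_pow_add_three_sub_two_pos n).le
  · have : (2 : ℝ) ^ (n + 2) ≤ 2 ^ (n + 3) - 2 := by
      have : (1 : ℝ) ≤ 2 ^ n := one_le_pow₀ one_le_two
      rw [pow_add, pow_add]; linarith
    exact div_le_div_of_nonneg_left (by positivity) (by positivity) this

lemma tendsto_iterate_expA_start :
    Tendsto (fun n => expA^[n] (1/6, 2/3)) atTop (𝓝 ((0 : ℝ), (1 : ℝ))) := by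
  simp_rw [iterate_expA_start]
  have h := tendsto_natCast_add_two_div
  refine .prodMk_nhds (squeeze_zero (fun n => ?_) (fun n => ?_) h) (by simpa using h.const_sub 1)
  · exact div_nonneg zero_le_one (two_pow_add_three_sub_two_pos n).le
  · exact div_le_div_of_nonneg_right (by linarith [n.cast_nonneg (α := ℝ)])
      (two_pow_add_three_sub_two_pos n).le

lemma continuousAt_expA_expBA : ContinuousAt (fun p => expA (expBA p)) ((0 : ℝ), (1 : ℝ)) := by
  refine (continuousAt_expA ?_).comp (continuous_expB.continuousAt.comp (continuousAt_expA ?_))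
  · norm_num [expBA_mk]
  · norm_num

lemma tendsto_unitDirection_dSeq :
    Tendsto (fun n => unitDirection (dSeq n)) atTop (𝓝 (-2 / √5, 1 / √5)) := by
  simp_rw [unitDirection_dSeq]
  have h : Tendsto (fun n : ℕ => 3 / ((n : ℝ) + 3)) atTop (𝓝 0) := by
    simpa [Function.comp_def] using
      (tendsto_const_div_atTop_nhds_zero_nat (3 : ℝ)).comp (tendsto_add_atTop_nat 3)
  have hlim : unitDirection (-2, 1) = (-2 / √5, 1 / √5) := by
    norm_num [unitDirection]
  rw [← hlim]
  refine (continuousAt_unitDirection (by simp)).tendsto.comp ?_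
  simpa using tendsto_const_nhds.prodMk_nhds (h.const_add 1)

theorem stmt_18 :
    Filter.Tendsto (fun n => expA^[n] (1/6, 2/3)) Filter.atTop
        (nhds ((0 : ℝ), (1 : ℝ))) ∧
      Filter.Tendsto pSeq Filter.atTop (nhds ((1/6 : ℝ), (2/3 : ℝ))) ∧
      Filter.Tendsto (fun n => ((dSeq n).1 / dNorm n, (dSeq n).2 / dNorm n))
        Filter.atTop
        (nhds ((-2 / Real.sqrt 5 : ℝ), (1 / Real.sqrt 5 : ℝ))) := by
  have hp : expA (expBA (0, 1)) = ((1/6 : ℝ), (2/3 : ℝ)) := by norm_num [expBA_mk, expA]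
  refine ⟨tendsto_iterate_expA_start, ?_, tendsto_unitDirection_dSeq⟩
  rw [← hp]
  exact continuousAt_expA_expBA.tendsto.comp tendsto_iterate_expA_start
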